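/- arXiv:1106.2362 — 2 statements merged into one kernel-verified Lean document; each statement's English description precedes it below -/
import Mathlib

section
/- Let k be a field and X a linearly ordered set. In the free metabelian Lie algebra L₍₂₎(X), the images of the generators x ∈ X together with the images of the regular R-words [a₀,a₁,...,aₙ] (n ≥ 1, aᵢ ∈ X, a₀ > a₁ ≤ a₂ ≤ ⋯ ≤ aₙ) form a k-linearly independent family. -/
/-- The free metabelian Lie algebra on `X` over `k`. -/
abbrev FreeMetabelianLieAlgebra (k : Type u) [Field k] (X : Type v) :=
  FreeLieAlgebra k X ⧸ LieAlgebra.derivedSeries k (FreeLieAlgebra k X) 2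

/-- The image of a generator `x ∈ X` in the free metabelian Lie algebra. -/
noncomputable def FreeMetabelianLieAlgebra.of (k : Type u) [Field k] {X : Type v} (x : X) :
    FreeMetabelianLieAlgebra k X :=
  LieSubmodule.Quotient.mk (N := LieAlgebra.derivedSeries k (FreeLieAlgebra k X) 2)
    (FreeLieAlgebra.of k x)

/-- A regular `R`-word on a linearly ordered set `X`: data `a₀, a₁, …, aₙ` with `n ≥ 1`
and `a₀ > a₁ ≤ a₂ ≤ ⋯ ≤ aₙ`. -/
structure RWord (X : Type v) [LinearOrder X] where
  a₀ : X
  a₁ : X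
  rest : List X
  lt : a₁ < a₀
  sorted : (a₁ :: rest).Pairwise (· ≤ ·)

/-- The image in the free metabelian Lie algebra of a regular `R`-word, i.e. the
left-normed bracket `[a₀, a₁, …, aₙ]` of the images of its letters. -/
noncomputable def RWord.toLie (k : Type u) [Field k] {X : Type v} [LinearOrder X]
    (w : RWord X) : FreeMetabelianLieAlgebra k X :=
  ((w.a₁ :: w.rest).map (FreeMetabelianLieAlgebra.of k)).foldl (fun u v => ⁅u, v⁆)
    (FreeMetabelianLieAlgebra.of k w.a₀)
/-!
Map `L₍₂₎(X)` to the metabelian Lie algebra `k^(X) ⋉ k[X]^(X)` with bracket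
`⁅(z, m), (z', m')⁆ = (0, z'·m - z·m')`, where `z ∈ k^(X)` acts on the free `k[X]`-module
`k[X]^(X)` through the linear polynomial `∑ zₓ X x`. The generator `x` goes to `(eₓ, eₓ)` and the
R-word `[a₀, a₁, …, aₙ]` to `a₁a₂⋯aₙ e_{a₀} - a₀a₂⋯aₙ e_{a₁}`. As `a₁ < a₀`, the first term has
the larger basis index, and it determines the word because `a₁ ≤ ⋯ ≤ aₙ` lists the multiset
`a₁⋯aₙ` in order; the generators are told apart by the first component, which vanishes on
brackets. Linear independence then follows from a triangularity argument on these leading terms.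
-/

theorem LinearIndependent.of_leading_coord {R M ι κ β : Type*} [Ring R] [NoZeroDivisors R]
    [AddCommGroup M] [Module R M] [LinearOrder β] {v : ι → M} (coord : κ → M →ₗ[R] R)
    (key : ι → κ) (rank : κ → β) (hkey : Function.Injective key)
    (hlead : ∀ i, coord (key i) (v i) ≠ 0)
    (hlower : ∀ i c, coord c (v i) ≠ 0 → c ≠ key i → rank c < rank (key i)) :
    LinearIndependent R v := by
  classical
  rw [linearIndependent_iff]
  intro l hl
  by_contra hl0
  obtain ⟨i, hi, hmax⟩ :=
    l.support.exists_max_image (rank ∘ key) (Finsupp.support_nonempty_iff.mpr hl0)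
  have hsum : ∑ j ∈ l.support, l j * coord (key i) (v j) = 0 := by
    simpa [Finsupp.linearCombination_apply, Finsupp.sum] using congrArg (coord (key i)) hl
  rw [Finset.sum_eq_single_of_mem i hi] at hsum
  · exact mul_ne_zero (Finsupp.mem_support_iff.mp hi) (hlead i) hsum
  intro j hj hji
  by_contra hne
  exact (hlower j (key i) (right_ne_zero_of_mul hne) (hkey.ne hji).symm).not_ge (hmax j hj)

def LieIdeal.quotientLift {R L L' : Type*} [CommRing R] [LieRing L] [LieAlgebra R L]
    [LieRing L'] [LieAlgebra R L'] (I : LieIdeal R L) (f : L →ₗ⁅R⁆ L') (h : I ≤ f.ker) :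
    L ⧸ I →ₗ⁅R⁆ L' :=
  { (I : Submodule R L).liftQ f.toLinearMap h with
    map_lie' := by
      rintro ⟨x⟩ ⟨y⟩
      exact f.map_lie x y }

theorem LieHom.map_foldl_lie {R L L' : Type*} [CommRing R] [LieRing L] [LieAlgebra R L]
    [LieRing L'] [LieAlgebra R L'] (f : L →ₗ⁅R⁆ L') (x : L) (l : List L) :
    f (l.foldl (⁅·, ·⁆) x) = (l.map f).foldl (⁅·, ·⁆) (f x) := by
  induction l generalizing x with
  | nil => rfl
  | cons y l ih => simp [ih]

theorem MvPolynomial.monomial_toFinsupp_cons {σ R : Type*} [CommSemiring R] [DecidableEq σ]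
    (a : σ) (s : Multiset σ) (r : R) :
    monomial (Multiset.toFinsupp (a ::ₘ s)) r = X a * monomial (Multiset.toFinsupp s) r := by
  rw [← Multiset.singleton_add, Multiset.toFinsupp_add, Multiset.toFinsupp_singleton,
    monomial_single_add, pow_one]

namespace RWord
variable {X : Type*} [LinearOrder X]

noncomputable def lead (w : RWord X) : X × (X →₀ ℕ) :=
  (w.a₀, Multiset.toFinsupp ((w.a₁ :: w.rest : List X) : Multiset X))

noncomputable def tail (w : RWord X) : X × (X →₀ ℕ) :=
  (w.a₁, Multiset.toFinsupp ((w.a₀ :: w.rest : List X) : Multiset X))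

lemma lead_injective : Function.Injective (lead (X := X)) := by
  rintro ⟨a, b, l, _, hs⟩ ⟨a', b', l', _, hs'⟩ hlead
  simp only [lead, Prod.mk.injEq] at hlead
  obtain ⟨rfl, h⟩ := hlead
  obtain ⟨rfl, rfl⟩ := List.cons_eq_cons.mp
    ((Multiset.coe_eq_coe.mp (Multiset.toFinsupp.injective h)).eq_of_pairwise' hs hs')
  rfl

lemma tail_ne_lead (w : RWord X) : w.tail ≠ w.lead :=
  fun h => w.lt.ne (congrArg Prod.fst h)

end RWord

noncomputable section
namespace FreeMetabelianLieAlgebra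

@[ext]
structure Model (k X : Type*) [CommRing k] where
  base : X →₀ k
  fibre : X →₀ MvPolynomial X k

namespace Model
variable (k X : Type*) [CommRing k]

def equivProd : Model k X ≃ (X →₀ k) × (X →₀ MvPolynomial X k) where
  toFun u := (u.base, u.fibre)
  invFun p := ⟨p.1, p.2⟩

instance : AddCommGroup (Model k X) := (equivProd k X).addCommGroup
instance : Module k (Model k X) := (equivProd k X).module k

variable {k X}

@[simp] lemma base_add (u v : Model k X) : (u + v).base = u.base + v.base := rfl
@[simp] lemma fibre_add (u v : Model k X) : (u + v).fibre = u.fibre + v.fibre := rfl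
@[simp] lemma base_sub (u v : Model k X) : (u - v).base = u.base - v.base := rfl
@[simp] lemma fibre_sub (u v : Model k X) : (u - v).fibre = u.fibre - v.fibre := rfl
@[simp] lemma base_smul (c : k) (u : Model k X) : (c • u).base = c • u.base := rfl
@[simp] lemma fibre_smul (c : k) (u : Model k X) : (c • u).fibre = c • u.fibre := rfl
@[simp] lemma base_zero : (0 : Model k X).base = 0 := rfl
@[simp] lemma fibre_zero : (0 : Model k X).fibre = 0 := rfl

def toPoly : (X →₀ k) →ₗ[k] MvPolynomial X k := Finsupp.linearCombination k MvPolynomial.X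

@[simp] lemma toPoly_single (x : X) : toPoly (Finsupp.single x (1 : k)) = MvPolynomial.X x := by
  simp [toPoly]

instance : Bracket (Model k X) (Model k X) where
  bracket u v := ⟨0, toPoly v.base • u.fibre - toPoly u.base • v.fibre⟩

@[simp] lemma base_lie (u v : Model k X) : ⁅u, v⁆.base = 0 := rfl
@[simp] lemma fibre_lie (u v : Model k X) :
    ⁅u, v⁆.fibre = toPoly v.base • u.fibre - toPoly u.base • v.fibre := rfl

instance : LieRing (Model k X) where
  add_lie u v w := by ext1 <;> simp; module
  lie_add u v w := by ext1 <;> simp; module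
  lie_self u := by ext1 <;> simp
  leibniz_lie u v w := by ext1 <;> simp; module

instance : LieAlgebra k (Model k X) where
  lie_smul c u v := by ext1 <;> simp; module

def fibreIdeal : LieIdeal k (Model k X) where
  carrier := {u | u.base = 0}
  add_mem' hu hv := by simp_all
  zero_mem' := rfl
  smul_mem' c u hu := by simp_all
  lie_mem _ := rfl

theorem derivedSeries_two_eq_bot : LieAlgebra.derivedSeries k (Model k X) 2 = ⊥ := by
  have h1 : LieAlgebra.derivedSeries k (Model k X) 1 ≤ fibreIdeal := by
    rw [LieAlgebra.derivedSeries_def, LieAlgebra.derivedSeriesOfIdeal_succ,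
      LieAlgebra.derivedSeriesOfIdeal_zero, LieSubmodule.lie_le_iff]
    exact fun _ _ _ _ => rfl
  rw [LieAlgebra.derivedSeries_def, LieAlgebra.derivedSeriesOfIdeal_succ,
    ← LieAlgebra.derivedSeries_def, LieSubmodule.lie_eq_bot_iff]
  intro u hu v hv
  ext1
  · rfl
  · simp [show u.base = 0 from h1 hu, show v.base = 0 from h1 hv]

def of (x : X) : Model k X := ⟨Finsupp.single x 1, Finsupp.single x 1⟩

def fibreSingle (p : X × (X →₀ ℕ)) : Model k X :=
  ⟨0, Finsupp.single p.1 (MvPolynomial.monomial p.2 1)⟩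

theorem foldl_lie_of [DecidableEq X] (m : X →₀ MvPolynomial X k) (l : List X) :
    (l.map of).foldl (⁅·, ·⁆) (⟨0, m⟩ : Model k X) =
      ⟨0, MvPolynomial.monomial (Multiset.toFinsupp (l : Multiset X)) (1 : k) • m⟩ := by
  induction l generalizing m with
  | nil => simp
  | cons x l ih =>
    have hstep : ⁅(⟨0, m⟩ : Model k X), of x⁆ =
        ⟨0, (MvPolynomial.X x : MvPolynomial X k) • m⟩ := by
      ext1 <;> simp [of]
    rw [List.map_cons, List.foldl_cons, hstep, ih, ← Multiset.cons_coe,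
      MvPolynomial.monomial_toFinsupp_cons, mul_smul, smul_comm]

def coeff : X ⊕ X × (X →₀ ℕ) → Model k X →ₗ[k] k
  | .inl x =>
    { toFun u := u.base x
      map_add' _ _ := rfl
      map_smul' _ _ := rfl }
  | .inr p =>
    { toFun u := (u.fibre p.1).coeff p.2
      map_add' _ _ := MvPolynomial.coeff_add _ _ _
      map_smul' _ _ := MvPolynomial.coeff_smul _ _ _ }

lemma coeff_inl (x : X) (u : Model k X) : coeff (.inl x) u = u.base x := rfl
lemma coeff_inr (p : X × (X →₀ ℕ)) (u : Model k X) :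
    coeff (.inr p) u = (u.fibre p.1).coeff p.2 := rfl

@[simp] lemma coeff_inl_fibreSingle (x : X) (p : X × (X →₀ ℕ)) :
    coeff (.inl x) (fibreSingle p : Model k X) = 0 := rfl

@[simp] lemma coeff_inr_fibreSingle_self (p : X × (X →₀ ℕ)) :
    coeff (.inr p) (fibreSingle p : Model k X) = 1 := by
  classical
  simp [coeff_inr, fibreSingle, MvPolynomial.coeff_monomial]

lemma coeff_inr_fibreSingle_of_ne {p q : X × (X →₀ ℕ)} (h : q ≠ p) :
    coeff (.inr p) (fibreSingle q : Model k X) = 0 := by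
  classical
  obtain ⟨x, d⟩ := p
  obtain ⟨y, e⟩ := q
  by_cases hxy : y = x
  · subst hxy
    simp_all [coeff_inr, fibreSingle, MvPolynomial.coeff_monomial]
  · simp [coeff_inr, fibreSingle, hxy]

def ofRWord [LinearOrder X] (w : RWord X) : Model k X := fibreSingle w.lead - fibreSingle w.tail

theorem linearIndependent_sum_elim_of_ofRWord [IsDomain k] [LinearOrder X] :
    LinearIndependent k (Sum.elim (of : X → Model k X) ofRWord) := by
  -- Generators are detected by the base coordinates, which vanish on R-words: they get rank `⊤`.
  refine .of_leading_coord coeff (Sum.map id RWord.lead)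
    (Sum.elim (fun _ => (⊤ : WithTop X)) (fun p => (p.1 : WithTop X)))
    (Function.injective_id.sumMap RWord.lead_injective) ?_ ?_
  · rintro (x | w)
    · simp [coeff_inl, of]
    · simp [ofRWord, coeff_inr_fibreSingle_of_ne (RWord.tail_ne_lead w)]
  · rintro (x | w) (y | p) hc hne
    · simp_all [coeff_inl, of, Finsupp.single_apply]
    · exact WithTop.coe_lt_top _
    · simp [ofRWord] at hc
    · obtain rfl : p = w.tail := by
        by_contra hpt
        rw [Sum.elim_inr, ofRWord, map_sub, coeff_inr_fibreSingle_of_ne (Ne.symm hpt),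
          coeff_inr_fibreSingle_of_ne fun h => hne (congrArg Sum.inr h.symm), sub_zero] at hc
        exact hc rfl
      exact WithTop.coe_lt_coe.mpr w.lt

end Model

variable (k : Type*) [Field k] (X : Type*)

def toModel : FreeMetabelianLieAlgebra k X →ₗ⁅k⁆ Model k X :=
  LieIdeal.quotientLift _ (FreeLieAlgebra.lift k (Model.of (k := k))) fun z hz => by
    have := LieIdeal.derivedSeries_map_le (f := FreeLieAlgebra.lift k (Model.of (k := k))) 2
      (LieIdeal.mem_map hz)
    rwa [Model.derivedSeries_two_eq_bot, LieSubmodule.mem_bot] at this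

variable {k X}

@[simp] lemma toModel_of (x : X) : toModel k X (of k x) = Model.of x :=
  FreeLieAlgebra.lift_of_apply _ x

lemma toModel_toLie [LinearOrder X] (w : RWord X) :
    toModel k X (w.toLie k) = Model.ofRWord w := by
  have hof : toModel k X ∘ FreeMetabelianLieAlgebra.of k = Model.of := funext toModel_of
  have hstart : ⁅(Model.of w.a₀ : Model k X), (Model.of w.a₁ : Model k X)⁆ =
      ⟨0, (MvPolynomial.X w.a₁ : MvPolynomial X k) • Finsupp.single w.a₀ 1 -
        (MvPolynomial.X w.a₀ : MvPolynomial X k) • Finsupp.single w.a₁ (1 : MvPolynomial X k)⟩ := by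
    ext1 <;> simp [Model.of]
  rw [RWord.toLie, List.map_cons, List.foldl_cons, LieHom.map_foldl_lie, List.map_map, hof,
    LieHom.map_lie, toModel_of, toModel_of, hstart, Model.foldl_lie_of]
  ext1
  · simp [Model.ofRWord, Model.fibreSingle]
  · simp [Model.ofRWord, Model.fibreSingle, RWord.lead, RWord.tail, ← Multiset.cons_coe,
      MvPolynomial.monomial_toFinsupp_cons, smul_sub, mul_comm]

end FreeMetabelianLieAlgebra

/-- The images of the generators together with the images of the regular `R`-words form a
`k`-linearly independent family in the free metabelian Lie algebra `L₍₂₎(X)`. -/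
theorem freeMetabelian_linearIndependent (k : Type u) [Field k] (X : Type v) [LinearOrder X] :
    LinearIndependent k
      (Sum.elim (fun x : X => FreeMetabelianLieAlgebra.of k x)
        (fun w : RWord X => w.toLie k)) := by
  open FreeMetabelianLieAlgebra in
  have hfam : (toModel k X).toLinearMap ∘ Sum.elim (of k) (RWord.toLie k) =
      Sum.elim Model.of (Model.ofRWord (k := k)) := by
    ext (x | w) <;> simp [toModel_toLie]
  exact .of_comp _ (hfam ▸ FreeMetabelianLieAlgebra.Model.linearIndependent_sum_elim_of_ofRWord)
end
end

section
/- Let k be a field, let V₃ = {0,1}³ with Hamming distance d, and let ML_{Cu₃} be the quotient of the free metabelian Lie algebra L₍₂₎(V₃) over k by the Lie ideal generated by all brackets ⁅ε,δ⁆ with d(ε,δ) = 1. Then for all δ₁, δ₂, γ, μ, μ' ∈ V₃ with d(δ₁,δ₂) = 2, d(γ,δ₁) = 1, d(γ,δ₂) = 3, d(μ,γ) = 1, d(μ,δ₂) = 2, d(μ',μ) = 1, d(μ',δ₂) = 1 and d(μ,δ₁) ≠ 1, the image in ML_{Cu₃} of the left-normed bracket [⁅δ₁,δ₂⁆, γ,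 μ, μ'] is zero. -/
/-- The Lie ideal of `L₍₂₎({0,1}³)` generated by the brackets of pairs of vertices of the
3-cube at Hamming distance 1. -/
noncomputable def cubeIdeal (k : Type u) [Field k] :
    LieIdeal k (FreeMetabelianLieAlgebra k (Fin 3 → Bool)) :=
  LieSubmodule.lieSpan k (FreeMetabelianLieAlgebra k (Fin 3 → Bool))
    {x | ∃ ε δ : Fin 3 → Bool, hammingDist ε δ = 1 ∧
      x = ⁅FreeMetabelianLieAlgebra.of k ε, FreeMetabelianLieAlgebra.of k δ⁆}

/-!
Modulo the relations, the generators `γ, δ₁`, `δ₂, μ'`, `μ', μ` and `μ, γ` commute. The Jacobi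
identity lets a commuting pair be exchanged inside a left-normed bracket, and in a metabelian Lie
algebra all entries after the first two of a left-normed bracket commute. Together these move the
bracket to `[γ, μ', μ, δ₂, δ₁]`, whose head `⁅⁅γ, μ'⁆, μ⁆` vanishes since `μ` commutes with both
`γ` and `μ'`.
-/

section LieRing

variable {L : Type*} [LieRing L]

theorem lie_lie_comm_of_lie_eq_zero {x y z : L} (h : ⁅y, z⁆ = 0) :
    ⁅⁅x, y⁆, z⁆ = ⁅⁅x, z⁆, y⁆ := by
  have jacobi := leibniz_lie x y z
  rw [h, lie_zero, ← lie_skew y ⁅x, z⁆] at jacobi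
  rw [← sub_eq_zero, sub_eq_add_neg, ← jacobi]

theorem lie_lie_eq_lie_lie_of_lie_eq_zero {x y z : L} (h : ⁅z, x⁆ = 0) :
    ⁅⁅x, y⁆, z⁆ = ⁅⁅z, y⁆, x⁆ := by
  have jacobi := leibniz_lie z x y
  rw [h, zero_lie, zero_add] at jacobi
  rw [← lie_skew ⁅z, y⁆ x, ← jacobi, lie_skew]

theorem lie_lie_eq_zero_of_lie_eq_zero {x y z : L} (hyz : ⁅y, z⁆ = 0) (hxz : ⁅x, z⁆ = 0) :
    ⁅⁅x, y⁆, z⁆ = 0 := by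
  rw [lie_lie_comm_of_lie_eq_zero hyz, hxz, zero_lie]

end LieRing

namespace LieAlgebra

variable {R L : Type*} [CommRing R] [LieRing L] [LieAlgebra R L]

theorem lie_mem_derivedSeries_one (x y : L) : ⁅x, y⁆ ∈ derivedSeries R L 1 :=
  LieSubmodule.lie_mem_lie (LieSubmodule.mem_top x) (LieSubmodule.mem_top y)

theorem lie_lie_lie_eq_zero_of_derivedSeries_two_eq_bot (h : derivedSeries R L 2 = ⊥)
    (a b c d : L) : ⁅⁅a, b⁆, ⁅c, d⁆⁆ = 0 := by
  have hmem : ⁅⁅a, b⁆, ⁅c, d⁆⁆ ∈ derivedSeries R L 2 :=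
    LieSubmodule.lie_mem_lie (lie_mem_derivedSeries_one a b) (lie_mem_derivedSeries_one c d)
  rwa [h, LieSubmodule.mem_bot] at hmem

theorem lie_lie_lie_comm_of_derivedSeries_two_eq_bot (h : derivedSeries R L 2 = ⊥)
    (a b x y : L) : ⁅⁅⁅a, b⁆, x⁆, y⁆ = ⁅⁅⁅a, b⁆, y⁆, x⁆ := by
  have jacobi := leibniz_lie ⁅a, b⁆ x y
  rw [lie_lie_lie_eq_zero_of_derivedSeries_two_eq_bot h, ← lie_skew x] at jacobi
  rw [← sub_eq_zero, sub_eq_add_neg, ← jacobi]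

def quotientMk (I : LieIdeal R L) : L →ₗ⁅R⁆ L ⧸ I where
  toLinearMap := (LieSubmodule.Quotient.mk' I : L →ₗ[R] L ⧸ I)
  map_lie' {x y} := LieSubmodule.Quotient.mk_bracket I x y

theorem quotientMk_surjective (I : LieIdeal R L) : Function.Surjective (quotientMk I) :=
  LieSubmodule.Quotient.surjective_mk' I

theorem ker_quotientMk (I : LieIdeal R L) : (quotientMk I).ker = I := by
  ext x
  exact LieSubmodule.Quotient.mk_eq_zero'

theorem derivedSeries_quotient_derivedSeries_eq_bot (n : ℕ) :
    derivedSeries R (L ⧸ derivedSeries R L n) n = ⊥ := by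
  rw [← LieIdeal.derivedSeries_map_eq n (quotientMk_surjective _),
    LieIdeal.map_eq_bot_iff, ker_quotientMk]

theorem derivedSeries_quotient_eq_bot {n : ℕ} (h : derivedSeries R L n = ⊥) (I : LieIdeal R L) :
    derivedSeries R (L ⧸ I) n = ⊥ := by
  rw [← LieIdeal.derivedSeries_map_eq n (quotientMk_surjective I), h,
    LieIdeal.map_eq_bot_iff]
  exact bot_le

end LieAlgebra

theorem FreeMetabelianLieAlgebra.derivedSeries_two_eq_bot (k : Type*) [Field k] (X : Type*) :
    LieAlgebra.derivedSeries k (FreeMetabelianLieAlgebra k X) 2 = ⊥ :=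
  LieAlgebra.derivedSeries_quotient_derivedSeries_eq_bot 2

theorem cubeIdeal.lie_mk_of_mk_of_eq_zero (k : Type*) [Field k] {ε δ : Fin 3 → Bool}
    (h : hammingDist ε δ = 1) :
    ⁅LieSubmodule.Quotient.mk (N := cubeIdeal k) (FreeMetabelianLieAlgebra.of k ε),
      LieSubmodule.Quotient.mk (N := cubeIdeal k) (FreeMetabelianLieAlgebra.of k δ)⁆ = 0 := by
  rw [← LieSubmodule.Quotient.mk_bracket, LieSubmodule.Quotient.mk_eq_zero']
  exact LieSubmodule.subset_lieSpan ⟨ε, δ, h, rfl⟩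

theorem cube_relation_R5'_general (k : Type u) [Field k] (δ₁ δ₂ γ μ μ' : Fin 3 → Bool)
    (h2 : hammingDist γ δ₁ = 1)
    (h4 : hammingDist μ γ = 1)
    (h6 : hammingDist μ' μ = 1) (h7 : hammingDist μ' δ₂ = 1) :
    LieSubmodule.Quotient.mk (N := cubeIdeal k)
        ⁅⁅⁅⁅FreeMetabelianLieAlgebra.of k δ₁, FreeMetabelianLieAlgebra.of k δ₂⁆,
              FreeMetabelianLieAlgebra.of k γ⁆, FreeMetabelianLieAlgebra.of k μ⁆,
          FreeMetabelianLieAlgebra.of k μ'⁆ = 0 := by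
  simp only [LieSubmodule.Quotient.mk_bracket]
  set e : (Fin 3 → Bool) → FreeMetabelianLieAlgebra k (Fin 3 → Bool) ⧸ cubeIdeal k :=
    fun v => LieSubmodule.Quotient.mk (FreeMetabelianLieAlgebra.of k v)
  have rel {ε δ : Fin 3 → Bool} (h : hammingDist ε δ = 1) : ⁅e ε, e δ⁆ = 0 :=
    cubeIdeal.lie_mk_of_mk_of_eq_zero k h
  have tail_comm := LieAlgebra.lie_lie_lie_comm_of_derivedSeries_two_eq_bot
    (LieAlgebra.derivedSeries_quotient_eq_bot
      (FreeMetabelianLieAlgebra.derivedSeries_two_eq_bot k (Fin 3 → Bool)) (cubeIdeal k))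
  calc ⁅⁅⁅⁅e δ₁, e δ₂⁆, e γ⁆, e μ⁆, e μ'⁆
      = ⁅⁅⁅⁅e γ, e δ₂⁆, e δ₁⁆, e μ⁆, e μ'⁆ := by rw [lie_lie_eq_lie_lie_of_lie_eq_zero (rel h2)]
    _ = ⁅⁅⁅⁅e γ, e δ₂⁆, e μ'⁆, e μ⁆, e δ₁⁆ := by
      rw [tail_comm _ _ (e δ₁), tail_comm _ _ (e δ₁), tail_comm _ _ (e μ)]
    _ = ⁅⁅⁅⁅e γ, e μ'⁆, e μ⁆, e δ₂⁆, e δ₁⁆ := by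
      rw [lie_lie_comm_of_lie_eq_zero (rel ((hammingDist_comm _ _).trans h7)), tail_comm _ _ (e δ₂)]
    _ = 0 := by
      rw [lie_lie_eq_zero_of_lie_eq_zero (rel h6) (rel ((hammingDist_comm _ _).trans h4)),
        zero_lie, zero_lie]

/-- In the partial commutative metabelian Lie algebra of the 3-cube, the image of the
left-normed bracket `[⁅δ₁,δ₂⁆, γ, μ, μ']` is zero whenever `d(δ₁,δ₂) = 2`, `d(γ,δ₁) = 1`,
`d(γ,δ₂) = 3`, `d(μ,γ) = 1`, `d(μ,δ₂) = 2`, `d(μ',μ) = 1`, `d(μ',δ₂) = 1` and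
`d(μ,δ₁) ≠ 1`. -/
theorem cube_relation_R5' (k : Type u) [Field k] (δ₁ δ₂ γ μ μ' : Fin 3 → Bool)
    (h1 : hammingDist δ₁ δ₂ = 2)
    (h2 : hammingDist γ δ₁ = 1) (h3 : hammingDist γ δ₂ = 3)
    (h4 : hammingDist μ γ = 1) (h5 : hammingDist μ δ₂ = 2)
    (h6 : hammingDist μ' μ = 1) (h7 : hammingDist μ' δ₂ = 1)
    (h8 : hammingDist μ δ₁ ≠ 1) :
    LieSubmodule.Quotient.mk (N := cubeIdeal k)
        ⁅⁅⁅⁅FreeMetabelianLieAlgebra.of k δ₁, FreeMetabelianLieAlgebra.of k δ₂⁆,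
              FreeMetabelianLieAlgebra.of k γ⁆, FreeMetabelianLieAlgebra.of k μ⁆,
          FreeMetabelianLieAlgebra.of k μ'⁆ = 0 :=
  cube_relation_R5'_general k δ₁ δ₂ γ μ μ' h2 h4 h6 h7
end
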